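/- If X = Σ_{j=1}^N F_j K F_j where K is symmetric and F_j are diagonal matrices with Σ_j F_j² = I, then trace(X) = trace(K) and, for each q, the sum of the top q eigenvalues of X is at most that of K (i.e., λ(K) weakly majorizes λ(X)). -/

import Mathlib

/-!
With `D j = diagonal (F j)`, the map `Φ A = ∑ j, D j * A * D j` is self-dual for the trace pairing
(`tr (A * Φ M) = tr (Φ A * M)`), monotone for the Loewner order and unital, so it preserves traces
and maps `{C | 0 ≤ C ≤ 1, tr C = q}` into itself. By Ky Fan's principle the sum of the `q` largest
eigenvalues of a symmetric `A` is the maximum of `tr (C * A)` over that set, attained at the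
spectral projection `P` of `X` onto its top `q` eigenvectors. Hence
`topSum X q = tr (P * X) = tr (Φ P * K) ≤ topSum K q`.
-/

/-- Eigenvalues of a Hermitian real matrix, sorted in decreasing order. -/
noncomputable def sortedEigs {p : ℕ} (K : Matrix (Fin p) (Fin p) ℝ) (hK : K.IsHermitian) : List ℝ :=
  (List.ofFn hK.eigenvalues).mergeSort (· ≥ ·)

/-- Sum of the top `q` eigenvalues (the `q`-Ky Fan norm for PSD matrices). -/
noncomputable def topSum {p : ℕ} (K : Matrix (Fin p) (Fin p) ℝ) (hK : K.IsHermitian) (q : ℕ) : ℝ :=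
  ((sortedEigs K hK).take q).sum

open Matrix Finset
open scoped MatrixOrder

theorem Finset.sum_mul_le_sum_of_threshold {ι : Type*} [Fintype ι] (s : Finset ι)
    {m c : ι → ℝ} {t : ℝ} (hs : ∀ i ∈ s, t ≤ m i) (hsc : ∀ i ∉ s, m i ≤ t)
    (hc0 : ∀ i, 0 ≤ c i) (hc1 : ∀ i, c i ≤ 1) (hc : ∑ i, c i = #s) :
    ∑ i, m i * c i ≤ ∑ i ∈ s, m i := by
  classical
  -- `(m i - t) * (1 - c i) ≥ 0` on `s` and `(t - m i) * c i ≥ 0` off `s`; the `t`-terms cancel by `hc`.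
  have key (i : ι) :
      m i * c i ≤ (if i ∈ s then m i else 0) + t * (c i - if i ∈ s then 1 else 0) := by
    split_ifs with hi
    · nlinarith [hs i hi, hc1 i]
    · nlinarith [hsc i hi, hc0 i]
  calc ∑ i, m i * c i
      ≤ ∑ i, ((if i ∈ s then m i else 0) + t * (c i - if i ∈ s then 1 else 0)) :=
        sum_le_sum fun i _ => key i
    _ = ∑ i ∈ s, m i := by
        simp [sum_add_distrib, ← mul_sum, sum_sub_distrib, hc]

theorem Fin.sum_mul_le_sum_val_lt_of_antitone {p q : ℕ} {m c : Fin p → ℝ} (hm : Antitone m)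
    (hq : 0 < q) (hqp : q ≤ p) (hc0 : ∀ i, 0 ≤ c i) (hc1 : ∀ i, c i ≤ 1)
    (hc : ∑ i, c i = q) :
    ∑ i, m i * c i ≤ ∑ i with i.val < q, m i := by
  refine sum_mul_le_sum_of_threshold _ (t := m ⟨q - 1, by omega⟩) (fun i hi => hm ?_)
    (fun i hi => hm ?_) hc0 hc1 ?_
  · simp only [mem_filter, mem_univ, true_and] at hi
    rw [Fin.le_def]; dsimp only; omega
  · simp only [mem_filter, mem_univ, true_and, not_lt] at hi
    rw [Fin.le_def]; dsimp only; omega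
  · rw [Fin.card_filter_val_lt, min_eq_right hqp, hc]

theorem List.exists_perm_antitone_mergeSort_ofFn {α : Type*} [LinearOrder α] {n : ℕ}
    (f : Fin n → α) :
    ∃ σ : Equiv.Perm (Fin n), Antitone (f ∘ σ) ∧
      (List.ofFn f).mergeSort (· ≥ ·) = List.ofFn (f ∘ σ) := by
  have hanti : Antitone (f ∘ Fin.revPerm.trans (Tuple.sort f)) := fun i j hij =>
    Tuple.monotone_sort f (Fin.rev_le_rev.mpr hij)
  exact ⟨_, hanti, List.Perm.eq_of_sortedGE List.sortedGE_mergeSort hanti.sortedGE_ofFn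
    ((List.mergeSort_perm _ _).trans (Equiv.Perm.ofFn_comp_perm _ f).symm)⟩

theorem exists_perm_antitone_topSum_eq {p : ℕ} {K : Matrix (Fin p) (Fin p) ℝ}
    (hK : K.IsHermitian) (q : ℕ) :
    ∃ σ : Equiv.Perm (Fin p), Antitone (hK.eigenvalues ∘ σ) ∧
      topSum K hK q = ∑ i with i.val < q, hK.eigenvalues (σ i) := by
  obtain ⟨σ, hσ, hsort⟩ := List.exists_perm_antitone_mergeSort_ofFn hK.eigenvalues
  exact ⟨σ, hσ, by rw [topSum, sortedEigs, hsort, List.sum_take_ofFn]; rfl⟩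

namespace Matrix

theorem trace_mul_sum_mul_mul {ι n R : Type*} [Fintype ι] [Fintype n] [CommSemiring R]
    (B : ι → Matrix n n R) (A M : Matrix n n R) :
    (A * ∑ j, B j * M * B j).trace = ((∑ j, B j * A * B j) * M).trace := by
  simp only [mul_sum, sum_mul, trace_sum]
  refine sum_congr rfl fun j _ => ?_
  rw [← Matrix.mul_assoc, trace_mul_cycle, ← Matrix.mul_assoc]

theorem sum_mul_mul_le_sum_mul_mul {ι n 𝕜 : Type*} [Fintype ι] [Fintype n] [RCLike 𝕜]
    {B : ι → Matrix n n 𝕜} (hB : ∀ j, (B j).IsHermitian) {A A' : Matrix n n 𝕜} (h : A ≤ A') :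
    ∑ j, B j * A * B j ≤ ∑ j, B j * A' * B j :=
  sum_le_sum fun j _ => by
    simpa only [star_eq_conjTranspose, (hB j).eq] using star_left_conjugate_le_conjugate h (B j)

theorem trace_mul_conj_diagonal {n : Type*} [Fintype n] [DecidableEq n]
    (C U : Matrix n n ℝ) (d : n → ℝ) :
    (C * (U * diagonal d * star U)).trace = ∑ i, (star U * C * U) i i * d i := by
  rw [← Matrix.mul_assoc, trace_mul_comm, ← Matrix.mul_assoc, ← Matrix.mul_assoc]
  simp [trace, mul_diagonal]

theorem IsHermitian.exists_mem_unitary_eq_conj_diagonal {n : Type*} [Fintype n] [DecidableEq n]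
    {K : Matrix n n ℝ} (hK : K.IsHermitian) :
    ∃ U ∈ unitary (Matrix n n ℝ), K = U * diagonal hK.eigenvalues * star U :=
  ⟨_, hK.eigenvectorUnitary.2, by simpa using hK.spectral_theorem⟩

end Matrix

theorem exists_trace_mul_eq_topSum {p q : ℕ} {X : Matrix (Fin p) (Fin p) ℝ}
    (hX : X.IsHermitian) (hqp : q ≤ p) :
    ∃ P : Matrix (Fin p) (Fin p) ℝ, 0 ≤ P ∧ P ≤ 1 ∧ P.trace = q ∧
      (P * X).trace = topSum X hX q := by
  obtain ⟨σ, -, hσ⟩ := exists_perm_antitone_topSum_eq hX q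
  obtain ⟨U, hU, hXU⟩ := hX.exists_mem_unitary_eq_conj_diagonal
  set e : Fin p → ℝ := fun i => if (σ.symm i).val < q then 1 else 0
  have he (f : Fin p → ℝ) : ∑ i, e i * f i = ∑ i with i.val < q, f (σ i) := by
    rw [← Equiv.sum_comp σ, sum_filter]
    simp [e]
  have hd0 : 0 ≤ diagonal e := (posSemidef_diagonal_iff.mpr fun i => by positivity).nonneg
  have hd1 : diagonal e ≤ 1 := by
    rw [le_iff, ← diagonal_one, diagonal_sub, posSemidef_diagonal_iff]
    intro i; simp only [e]; split_ifs <;> norm_num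
  refine ⟨U * diagonal e * star U, star_right_conjugate_nonneg hd0 U, ?_, ?_, ?_⟩
  · simpa [Unitary.mul_star_self_of_mem hU] using star_right_conjugate_le_conjugate hd1 U
  · rw [trace_mul_cycle, Unitary.star_mul_self_of_mem hU, Matrix.one_mul, trace_diagonal]
    simpa [Fin.card_filter_val_lt, hqp] using he 1
  · calc (U * diagonal e * star U * X).trace
        = ∑ i, (star U * (U * diagonal e * star U) * U) i i * hX.eigenvalues i := by
          conv_lhs => rw [hXU]
          exact trace_mul_conj_diagonal _ _ _
      _ = topSum X hX q := by
          have hUU := Unitary.star_mul_self_of_mem hU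
          rw [hσ, ← he, Matrix.mul_assoc, Matrix.mul_assoc, hUU, Matrix.mul_one,
            ← Matrix.mul_assoc, hUU, Matrix.one_mul]
          simp

theorem trace_mul_le_topSum {p q : ℕ} {K C : Matrix (Fin p) (Fin p) ℝ} (hK : K.IsHermitian)
    (hC0 : 0 ≤ C) (hC1 : C ≤ 1) (hq : 0 < q) (hqp : q ≤ p) (hCq : C.trace = q) :
    (C * K).trace ≤ topSum K hK q := by
  obtain ⟨τ, hτ, hsum⟩ := exists_perm_antitone_topSum_eq hK q
  obtain ⟨W, hW, hKW⟩ := hK.exists_mem_unitary_eq_conj_diagonal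
  have hC'0 : 0 ≤ star W * C * W := star_left_conjugate_nonneg hC0 W
  have hC'1 : star W * C * W ≤ 1 := by
    simpa [Unitary.star_mul_self_of_mem hW] using star_left_conjugate_le_conjugate hC1 W
  have hC'q : ∑ i, (star W * C * W) (τ i) (τ i) = q := by
    rw [Equiv.sum_comp τ (fun i => (star W * C * W) i i), ← hCq]
    exact (trace_mul_cycle _ _ _).trans (by rw [Unitary.mul_star_self_of_mem hW, Matrix.one_mul])
  calc (C * K).trace = ∑ i, (star W * C * W) i i * hK.eigenvalues i := by
        conv_lhs => rw [hKW]
        exact trace_mul_conj_diagonal _ _ _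
    _ = ∑ i, hK.eigenvalues (τ i) * (star W * C * W) (τ i) (τ i) := by
        rw [← Equiv.sum_comp τ]
        simp_rw [mul_comm]
    _ ≤ topSum K hK q := by
        rw [hsum]
        refine Fin.sum_mul_le_sum_val_lt_of_antitone hτ hq hqp
          (fun i => hC'0.posSemidef.diag_nonneg) (fun i => ?_) hC'q
        simpa using (le_iff.mp hC'1).diag_nonneg (i := τ i)

theorem stmt7 {p N : ℕ} (K : Matrix (Fin p) (Fin p) ℝ) (hK : K.IsHermitian)
    (F : Fin N → (Fin p → ℝ))
    (hF : ∑ j, Matrix.diagonal (F j) ^ 2 = (1 : Matrix (Fin p) (Fin p) ℝ))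
    (X : Matrix (Fin p) (Fin p) ℝ)
    (hX : X = ∑ j : Fin N, Matrix.diagonal (F j) * K * Matrix.diagonal (F j))
    (hXh : X.IsHermitian) :
    (∀ q : ℕ, 1 ≤ q → q ≤ p → topSum X hXh q ≤ topSum K hK q) ∧
    X.trace = K.trace := by
  have hD (j : Fin N) : (diagonal (F j)).IsHermitian := isHermitian_diagonal _
  have hD1 : ∑ j, diagonal (F j) * 1 * diagonal (F j) = 1 := by simpa [sq] using hF
  refine ⟨fun q hq hqp => ?_, ?_⟩
  · obtain ⟨P, hP0, hP1, hPq, hPX⟩ := exists_trace_mul_eq_topSum hXh hqp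
    set C := ∑ j, diagonal (F j) * P * diagonal (F j)
    have hC0 : 0 ≤ C := by simpa using sum_mul_mul_le_sum_mul_mul hD hP0
    have hC1 : C ≤ 1 := hD1 ▸ sum_mul_mul_le_sum_mul_mul hD hP1
    have hCq : C.trace = q := by
      rw [← Matrix.mul_one C, ← trace_mul_sum_mul_mul, hD1, Matrix.mul_one, hPq]
    calc topSum X hXh q = (P * X).trace := hPX.symm
      _ = (C * K).trace := by rw [hX, trace_mul_sum_mul_mul]
      _ ≤ topSum K hK q := trace_mul_le_topSum hK hC0 hC1 hq hqp hCq
  · rw [hX, ← Matrix.one_mul (∑ j, _), trace_mul_sum_mul_mul, hD1, Matrix.one_mul]
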